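/- Let G₁ be the star graph on n ≥ 3 vertices with Laplacian matrix Q₁, let p > 0, and let Q = [[Q₁ + np·I, −pJ], [−pJ, nI − J − Q₁ + np·I]] be the supra-Laplacian of the star coupled to its complementary graph via the n-to-n interconnection B = pJ. Then the third-smallest eigenvalue of Q equals λ₃(Q) = min(2np, 1 + np); in particular, λ₃(Q) = 2np for p ≤ 1/n and λ₃(Q) = 1 + np for p ≥ 1/n, so the structural transition occurs at the third-smallest eigenvalue at the threshold p*_{N−2} = 1/n. -/

import Mathlib

open Matrix

/-- The eigenvalues of a Hermitian matrix, sorted in increasing order (as a list). -/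
noncomputable def sortedEigs {ι : Type*} [Fintype ι] [DecidableEq ι]
    {A : Matrix ι ι ℝ} (hA : A.IsHermitian) : List ℝ :=
  Multiset.sort (Finset.univ.val.map hA.eigenvalues) (· ≤ ·)

/-- The `n×n` all-ones matrix `J = u uᵀ`. -/
def allOnes (n : ℕ) : Matrix (Fin n) (Fin n) ℝ := Matrix.of fun _ _ => 1

open Matrix Polynomial Finset

section auxpoly
variable {ι : Type*} [Fintype ι] [DecidableEq ι] {R : Type*} [CommRing R]

lemma my_charmatrix_diagonal (v : ι → R) :
    charmatrix (Matrix.diagonal v) = Matrix.diagonal (fun i => X - C (v i)) := by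
  ext i j
  by_cases h : i = j
  · subst h; simp [charmatrix_apply]
  · simp [charmatrix_apply, Matrix.diagonal_apply_ne _ h]

lemma my_charpoly_diagonal (v : ι → R) :
    (Matrix.diagonal v).charpoly = ∏ i, (X - C (v i)) := by
  rw [Matrix.charpoly, my_charmatrix_diagonal, Matrix.det_diagonal]

lemma my_charpoly_conj (P P' A : Matrix ι ι R) (h1 : P * P' = 1) :
    (P * A * P').charpoly = A.charpoly := by
  have key : charmatrix (P * A * P') =
      (C : R →+* R[X]).mapMatrix P * charmatrix A * (C : R →+* R[X]).mapMatrix P' := by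
    show Matrix.scalar ι (X : R[X]) - (C : R →+* R[X]).mapMatrix (P * A * P') = _
    have hPP' : (C : R →+* R[X]).mapMatrix P * (C : R →+* R[X]).mapMatrix P' = 1 := by
      rw [← _root_.map_mul, h1, _root_.map_one]
    have hc : Matrix.scalar ι (X : R[X]) * (C : R →+* R[X]).mapMatrix P'
        = (C : R →+* R[X]).mapMatrix P' * Matrix.scalar ι (X : R[X]) :=
      (Matrix.scalar_commute (X : R[X]) (fun r' => Commute.all _ _)
        ((C : R →+* R[X]).mapMatrix P')).eq
    rw [charmatrix, mul_sub, sub_mul, _root_.map_mul, _root_.map_mul]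
    congr 1
    rw [mul_assoc, hc, ← mul_assoc, hPP', one_mul]
  rw [Matrix.charpoly, key, det_mul, det_mul, Matrix.charpoly]
  have hdet : ((C : R →+* R[X]).mapMatrix P).det * ((C : R →+* R[X]).mapMatrix P').det = 1 := by
    rw [← det_mul, ← _root_.map_mul, h1, _root_.map_one, det_one]
  calc ((C : R →+* R[X]).mapMatrix P).det * (charmatrix A).det
        * ((C : R →+* R[X]).mapMatrix P').det
      = (charmatrix A).det * (((C : R →+* R[X]).mapMatrix P).det
        * ((C : R →+* R[X]).mapMatrix P').det) := by ring
    _ = (charmatrix A).det := by rw [hdet, mul_one]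

end auxpoly
section auxeig
open Matrix Polynomial Finset

lemma my_eig_multiset {ι : Type*} [Fintype ι] [DecidableEq ι]
    {A : Matrix ι ι ℝ} (hA : A.IsHermitian) (d : ι → ℝ)
    (P : Matrix ι ι ℝ) (hP : IsUnit P) (h : A * P = P * Matrix.diagonal d) :
    Multiset.map hA.eigenvalues Finset.univ.val = Multiset.map d Finset.univ.val := by
  have hdet : IsUnit P.det := (Matrix.isUnit_iff_isUnit_det P).mp hP
  have hA1 : A = P * Matrix.diagonal d * P⁻¹ := by
    rw [← h, Matrix.mul_nonsing_inv_cancel_right _ _ hdet]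
  have hc1 : A.charpoly = (Matrix.diagonal d).charpoly := by
    rw [hA1]
    exact my_charpoly_conj P P⁻¹ _ (Matrix.mul_nonsing_inv _ hdet)
  have hU : ((hA.eigenvectorUnitary : Matrix ι ι ℝ) : Matrix ι ι ℝ)
      * (star (hA.eigenvectorUnitary : Matrix ι ι ℝ)) = 1 := by
    exact (Matrix.mem_unitaryGroup_iff).mp (hA.eigenvectorUnitary).2
  have hc2 : A.charpoly = (Matrix.diagonal hA.eigenvalues).charpoly := by
    conv_lhs => rw [hA.spectral_theorem]
    rw [RCLike.ofReal_real_eq_id]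
    exact my_charpoly_conj _ _ _ hU
  have hprod : ∏ i, (X - C (hA.eigenvalues i)) = ∏ i, (X - C (d i)) := by
    rw [← my_charpoly_diagonal, ← my_charpoly_diagonal, ← hc1, ← hc2]
  have hroots := congrArg Polynomial.roots hprod
  rwa [Finset.prod_eq_multiset_prod, Finset.prod_eq_multiset_prod,
    show (Finset.univ.val.map fun i => X - C (hA.eigenvalues i))
      = ((Finset.univ.val.map hA.eigenvalues).map fun a => X - C a) by
        rw [Multiset.map_map]; rfl,
    show (Finset.univ.val.map fun i => X - C (d i))
      = ((Finset.univ.val.map d).map fun a => X - C a) by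
        rw [Multiset.map_map]; rfl,
    Polynomial.roots_multiset_prod_X_sub_C, Polynomial.roots_multiset_prod_X_sub_C] at hroots

end auxeig
section auxsort
open Matrix Finset

lemma my_sort_getElem2 (a b c : ℝ) (t : Multiset ℝ) (hab : a ≤ b) (hbc : b ≤ c)
    (ht : ∀ x ∈ t, c ≤ x) :
    (Multiset.sort (a ::ₘ b ::ₘ c ::ₘ t) (· ≤ ·))[2]! = c := by
  rw [Multiset.sort_cons a _ _ ?ha, Multiset.sort_cons b _ _ ?hb, Multiset.sort_cons c _ _ ht]
  · simp
  case ha =>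
    intro x hx
    rcases Multiset.mem_cons.mp hx with rfl | hx
    · exact hab
    rcases Multiset.mem_cons.mp hx with rfl | hx
    · exact le_trans hab hbc
    · exact le_trans hab (le_trans hbc (ht x hx))
  case hb =>
    intro x hx
    rcases Multiset.mem_cons.mp hx with rfl | hx
    · exact hbc
    · exact le_trans hbc (ht x hx)

lemma my_map_univ {n : ℕ} (h l0 : Fin n) (hne : l0 ≠ h) (q : Fin n → ℝ) (A B C : ℝ)
    (hqh : q h = A) (hql : q l0 = B) (hqC : ∀ i, i ≠ h → i ≠ l0 → q i = C) :
    Multiset.map q (Finset.univ : Finset (Fin n)).val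
      = A ::ₘ B ::ₘ Multiset.replicate (n - 2) C := by
  set s0 : Multiset (Fin n) := (Finset.univ : Finset (Fin n)).val with hs0
  have d0 : s0.Nodup := Finset.univ.nodup
  have hhm : h ∈ s0 := Finset.mem_univ h
  have h1 : s0 = h ::ₘ s0.erase h := (Multiset.cons_erase hhm).symm
  have hl0m : l0 ∈ s0.erase h := (Multiset.mem_erase_of_ne hne).mpr (Finset.mem_univ l0)
  have h2 : s0.erase h = l0 ::ₘ (s0.erase h).erase l0 := (Multiset.cons_erase hl0m).symm
  set t : Multiset (Fin n) := (s0.erase h).erase l0 with hts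
  have htmem : ∀ x ∈ t, x ≠ h ∧ x ≠ l0 := by
    intro x hx
    have d1 : (s0.erase h).Nodup := d0.erase h
    have hx1 := (d1.mem_erase_iff).mp hx
    have hx2 := (d0.mem_erase_iff).mp hx1.2
    exact ⟨hx2.1, hx1.1⟩
  have hcard : Multiset.card t = n - 2 := by
    have hc0 : Multiset.card s0 = n := by
      rw [hs0]; simp
    rw [hts, Multiset.card_erase_of_mem hl0m, Multiset.card_erase_of_mem hhm, hc0]
    rfl
  have hmapt : Multiset.map q t = Multiset.replicate (n - 2) C := by
    have : Multiset.map q t = Multiset.map (fun _ => C) t := by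
      apply Multiset.map_congr rfl
      intro x hx
      exact hqC x (htmem x hx).1 (htmem x hx).2
    rw [this, Multiset.map_const', hcard]
  rw [h1, h2, Multiset.map_cons, Multiset.map_cons, hqh, hql, hmapt]

end auxsort
section stardefs
open Matrix Finset

/-- Eigenvectors of the star Laplacian. -/
def wvec (n : ℕ) (h l0 : Fin n) (i : Fin n) : Fin n → ℝ := fun j =>
  if i = h then 1
  else if i = l0 then (n : ℝ) * (if j = h then 1 else 0) - 1
  else (if j = i then 1 else 0) - (if j = l0 then 1 else 0)

/-- Eigenvalues of the star Laplacian. -/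
def muval (n : ℕ) (h l0 : Fin n) (i : Fin n) : ℝ :=
  if i = h then 0 else if i = l0 then (n : ℝ) else 1

/-- Eigenvector matrix of the supra-Laplacian. -/
def Pmat (n : ℕ) (h l0 : Fin n) : Matrix (Fin n ⊕ Fin n) (Fin n ⊕ Fin n) ℝ :=
  Matrix.of fun x y =>
    match x, y with
    | Sum.inl j, Sum.inl i => wvec n h l0 i j
    | Sum.inr j, Sum.inl i => if i = h then 1 else 0
    | Sum.inl j, Sum.inr i => if i = h then 1 else 0
    | Sum.inr j, Sum.inr i => if i = h then -1 else wvec n h l0 i j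

/-- Eigenvalues of the supra-Laplacian. -/
def dval (n : ℕ) (h l0 : Fin n) (p : ℝ) : Fin n ⊕ Fin n → ℝ
  | Sum.inl i => if i = h then 0 else muval n h l0 i + n * p
  | Sum.inr i => if i = h then 2 * n * p else n - muval n h l0 i + n * p

end stardefs
open Matrix Finset in
/-- For the star graph `G₁` on `n ≥ 3` vertices coupled to its complementary
graph via the n-to-n interconnection `B = pJ` with `p > 0`, the third-smallest eigenvalue
of the supra-Laplacian equals `min(2np, 1 + np)`; in particular `λ₃(Q) = 2np` for
`p ≤ 1/n` and `λ₃(Q) = 1 + np` for `p ≥ 1/n`, so the structural transition at the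
third-smallest eigenvalue occurs at the threshold `p*_{N−2} = 1/n`. -/
theorem stmt_17
    (n : ℕ) (hn : 3 ≤ n) (p : ℝ) (hp : 0 < p)
    (G₁ : SimpleGraph (Fin n)) [DecidableRel G₁.Adj] (hub : Fin n)
    (hstar : ∀ i j, G₁.Adj i j ↔ (i ≠ j ∧ (i = hub ∨ j = hub)))
    (Q : Matrix (Fin n ⊕ Fin n) (Fin n ⊕ Fin n) ℝ)
    (hQdef : Q = Matrix.fromBlocks
      (G₁.lapMatrix ℝ + ((n:ℝ) * p) • 1) (-(p • allOnes n))
      (-(p • allOnes n)) ((n:ℝ) • 1 - allOnes n - G₁.lapMatrix ℝ + ((n:ℝ) * p) • 1))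
    (hQH : Q.IsHermitian) :
    (sortedEigs hQH)[2]! = min (2 * (n:ℝ) * p) (1 + (n:ℝ) * p) ∧
      (p ≤ 1 / (n:ℝ) → (sortedEigs hQH)[2]! = 2 * (n:ℝ) * p) ∧
      (1 / (n:ℝ) ≤ p → (sortedEigs hQH)[2]! = 1 + (n:ℝ) * p) := by
  have hn3 : (3:ℝ) ≤ (n:ℝ) := by exact_mod_cast hn
  have hnpos : (0:ℝ) < (n:ℝ) := by linarith
  obtain ⟨l0, hl0⟩ : ∃ l : Fin n, l ≠ hub := by
    refine Fintype.exists_ne_of_one_lt_card ?_ hub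
    simp only [Fintype.card_fin]; omega
  have hhl : hub ≠ l0 := hl0.symm
  -- star graph facts
  have hnbrh : G₁.neighborFinset hub = Finset.univ.erase hub := by
    ext j
    simp only [SimpleGraph.mem_neighborFinset, hstar, Finset.mem_erase, Finset.mem_univ,
      and_true, true_or, ne_eq]
    exact ⟨fun hne hj => hne hj.symm, fun hj hh => hj hh.symm⟩
  have hnbrl : ∀ i, i ≠ hub → G₁.neighborFinset i = {hub} := by
    intro i hi
    ext j
    simp only [SimpleGraph.mem_neighborFinset, hstar, Finset.mem_singleton]
    constructor
    · rintro ⟨hne, hor⟩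
      rcases hor with h1 | h1
      · exact absurd h1 hi
      · exact h1
    · intro h1; subst h1; exact ⟨hi, Or.inr rfl⟩
  have hdegh : ((G₁.degree hub : ℕ) : ℝ) = (n:ℝ) - 1 := by
    rw [← SimpleGraph.card_neighborFinset_eq_degree, hnbrh,
      Finset.card_erase_of_mem (Finset.mem_univ _), Finset.card_univ, Fintype.card_fin,
      Nat.cast_sub (by omega), Nat.cast_one]
  have hdegl : ∀ i, i ≠ hub → ((G₁.degree i : ℕ) : ℝ) = 1 := by
    intro i hi
    rw [← SimpleGraph.card_neighborFinset_eq_degree, hnbrl i hi, Finset.card_singleton,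
      Nat.cast_one]
  have hw_hub : wvec n hub l0 hub = fun _ => (1:ℝ) := by
    funext j; simp [wvec]
  -- Laplacian eigenvector equations
  have hlapw : ∀ i, G₁.lapMatrix ℝ *ᵥ wvec n hub l0 i
      = muval n hub l0 i • wvec n hub l0 i := by
    intro i
    rcases eq_or_ne i hub with hih | hih
    · rw [hih, hw_hub, SimpleGraph.lapMatrix_mulVec_const_eq_zero,
        show muval n hub l0 hub = 0 by simp [muval], zero_smul]
    rcases eq_or_ne i l0 with hil | hil
    · rw [hil]
      funext j
      rw [SimpleGraph.lapMatrix_mulVec_apply]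
      rcases eq_or_ne j hub with hjh | hjh
      · rw [hjh]
        have hsum : ∑ u ∈ G₁.neighborFinset hub, wvec n hub l0 l0 u = -((n:ℝ) - 1) := by
          rw [hnbrh]
          have hcongr : ∀ u ∈ Finset.univ.erase hub, wvec n hub l0 l0 u = -1 := by
            intro u hu
            have hu' : u ≠ hub := (Finset.mem_erase.mp hu).1
            simp [wvec, hl0, hu']
          rw [Finset.sum_congr rfl hcongr, Finset.sum_const,
            Finset.card_erase_of_mem (Finset.mem_univ _), Finset.card_univ, Fintype.card_fin,
            nsmul_eq_mul, Nat.cast_sub (by omega), Nat.cast_one]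
          ring
        rw [hsum, hdegh]
        simp [wvec, muval, hl0]
        try ring
      · have hsum : ∑ u ∈ G₁.neighborFinset j, wvec n hub l0 l0 u = (n:ℝ) - 1 := by
          rw [hnbrl j hjh, Finset.sum_singleton]
          simp [wvec, hl0]
        rw [hsum, hdegl j hjh]
        simp [wvec, muval, hl0, hjh]
        try ring
    · funext j
      rw [SimpleGraph.lapMatrix_mulVec_apply]
      rcases eq_or_ne j hub with hjh | hjh
      · rw [hjh]
        have hsum : ∑ u ∈ G₁.neighborFinset hub, wvec n hub l0 i u = 0 := by
          rw [hnbrh]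
          have hcongr : ∀ u ∈ Finset.univ.erase hub, wvec n hub l0 i u
              = (if u = i then (1:ℝ) else 0) - (if u = l0 then 1 else 0) := by
            intro u _; simp [wvec, hih, hil]
          rw [Finset.sum_congr rfl hcongr, Finset.sum_sub_distrib,
            Finset.sum_ite_eq' _ i, Finset.sum_ite_eq' _ l0]
          simp [Finset.mem_erase, hih, hl0]
        rw [hsum, hdegh]
        simp [wvec, muval, hih, hil, Ne.symm hih, hhl]
        try ring
      · have hsum : ∑ u ∈ G₁.neighborFinset j, wvec n hub l0 i u = 0 := by
          rw [hnbrl j hjh, Finset.sum_singleton]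
          simp [wvec, hih, hil, Ne.symm hih, hhl]
        rw [hsum, hdegl j hjh]
        simp [wvec, muval, hih, hil]
        try ring
  -- all-ones matrix action
  have hJ1 : allOnes n *ᵥ (fun _ => (1:ℝ)) = fun _ => (n:ℝ) := by
    funext j
    simp [allOnes, Matrix.mulVec, dotProduct]
  have hJw : ∀ i, i ≠ hub → allOnes n *ᵥ wvec n hub l0 i = 0 := by
    intro i hih
    funext j
    simp only [allOnes, Matrix.mulVec, dotProduct, Matrix.of_apply, one_mul,
      Pi.zero_apply]
    rcases eq_or_ne i l0 with hil | hil
    · have hwl : wvec n hub l0 l0 = fun k => (n:ℝ) * (if k = hub then 1 else 0) - 1 := by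
        funext k; simp [wvec, hl0]
      rw [hil, hwl]
      rw [Finset.sum_sub_distrib, ← Finset.mul_sum, Finset.sum_ite_eq' _ hub]
      simp
    · have hwi : wvec n hub l0 i
          = fun k => (if k = i then (1:ℝ) else 0) - (if k = l0 then 1 else 0) := by
        funext k; simp [wvec, hih, hil]
      rw [hwi]
      rw [Finset.sum_sub_distrib, Finset.sum_ite_eq' _ i, Finset.sum_ite_eq' _ l0]
      simp
    -- block actions
  have hA1 : (G₁.lapMatrix ℝ + ((n:ℝ) * p) • 1) *ᵥ (fun _ => (1:ℝ)) = fun _ => (n:ℝ)*p := by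
    rw [Matrix.add_mulVec, SimpleGraph.lapMatrix_mulVec_const_eq_zero,
      Matrix.smul_mulVec, Matrix.one_mulVec]
    funext j; simp
  have hAw : ∀ i, i ≠ hub → (G₁.lapMatrix ℝ + ((n:ℝ) * p) • 1) *ᵥ wvec n hub l0 i
      = (muval n hub l0 i + (n:ℝ)*p) • wvec n hub l0 i := by
    intro i hi
    rw [Matrix.add_mulVec, hlapw i, Matrix.smul_mulVec, Matrix.one_mulVec]
    funext j; simp; ring
  have hB1 : (-(p • allOnes n)) *ᵥ (fun _ => (1:ℝ)) = fun _ => -(p*(n:ℝ)) := by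
    rw [Matrix.neg_mulVec, Matrix.smul_mulVec, hJ1]
    funext j; simp
  have hBneg1 : (-(p • allOnes n)) *ᵥ (fun _ => (-1:ℝ)) = fun _ => p*(n:ℝ) := by
    have hneg : (fun _ : Fin n => (-1:ℝ)) = -(fun _ => (1:ℝ)) := rfl
    rw [hneg, Matrix.mulVec_neg, hB1]
    funext j; simp
  have hBw : ∀ i, i ≠ hub → (-(p • allOnes n)) *ᵥ wvec n hub l0 i = 0 := by
    intro i hi
    rw [Matrix.neg_mulVec, Matrix.smul_mulVec, hJw i hi]
    simp
  have hD1 : ((n:ℝ) • 1 - allOnes n - G₁.lapMatrix ℝ + ((n:ℝ) * p) • 1) *ᵥ (fun _ => (1:ℝ))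
      = fun _ => (n:ℝ)*p := by
    rw [Matrix.add_mulVec, Matrix.sub_mulVec, Matrix.sub_mulVec, Matrix.smul_mulVec,
      Matrix.one_mulVec, hJ1, SimpleGraph.lapMatrix_mulVec_const_eq_zero,
      Matrix.smul_mulVec, Matrix.one_mulVec]
    funext j; simp
  have hDneg1 : ((n:ℝ) • 1 - allOnes n - G₁.lapMatrix ℝ + ((n:ℝ) * p) • 1) *ᵥ (fun _ => (-1:ℝ))
      = fun _ => -((n:ℝ)*p) := by
    have hneg : (fun _ : Fin n => (-1:ℝ)) = -(fun _ => (1:ℝ)) := rfl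
    rw [hneg, Matrix.mulVec_neg, hD1]
    funext j; simp
  have hDw : ∀ i, i ≠ hub → ((n:ℝ) • 1 - allOnes n - G₁.lapMatrix ℝ + ((n:ℝ) * p) • 1)
      *ᵥ wvec n hub l0 i = ((n:ℝ) - muval n hub l0 i + (n:ℝ)*p) • wvec n hub l0 i := by
    intro i hi
    rw [Matrix.add_mulVec, Matrix.sub_mulVec, Matrix.sub_mulVec, Matrix.smul_mulVec,
      Matrix.one_mulVec, hJw i hi, hlapw i, Matrix.smul_mulVec, Matrix.one_mulVec]
    funext j; simp; ring
  have h0fun : (fun _ : Fin n => (0:ℝ)) = 0 := rfl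
  -- the key column identity
  have hQP : Q * Pmat n hub l0 = Pmat n hub l0 * Matrix.diagonal (dval n hub l0 p) := by
    have hcol : ∀ y, (Q *ᵥ fun k => Pmat n hub l0 k y)
        = fun x => dval n hub l0 p y * Pmat n hub l0 x y := by
      intro y
      rw [hQdef]
      rcases y with i | i
      · rcases eq_or_ne i hub with hih | hih
        · have hcolfun : (fun k => Pmat n hub l0 k (Sum.inl i))
              = Sum.elim (fun _ => (1:ℝ)) (fun _ => (1:ℝ)) := by
            funext k
            rcases k with j | j <;> simp [Pmat, hih, wvec]
          rw [hcolfun, Matrix.fromBlocks_mulVec]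
          funext x
          rcases x with j | j <;>
            simp [Function.comp_def, Sum.elim_comp_inl, Sum.elim_comp_inr, hA1, hB1, hD1, Pmat, dval, hih, wvec] <;> ring
        · have hcolfun : (fun k => Pmat n hub l0 k (Sum.inl i))
              = Sum.elim (wvec n hub l0 i) (0 : Fin n → ℝ) := by
            funext k
            rcases k with j | j <;> simp [Pmat, hih]
          rw [hcolfun, Matrix.fromBlocks_mulVec]
          funext x
          rcases x with j | j
          · simp [Function.comp_def, Sum.elim_comp_inl, Sum.elim_comp_inr, hAw i hih, h0fun, Matrix.mulVec_zero, Pmat, dval, hih]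
            try ring
          · simp [Function.comp_def, Sum.elim_comp_inl, Sum.elim_comp_inr, hBw i hih, h0fun, Matrix.mulVec_zero, Pmat, dval, hih]
      · rcases eq_or_ne i hub with hih | hih
        · have hcolfun : (fun k => Pmat n hub l0 k (Sum.inr i))
              = Sum.elim (fun _ => (1:ℝ)) (fun _ => (-1:ℝ)) := by
            funext k
            rcases k with j | j <;> simp [Pmat, hih]
          rw [hcolfun, Matrix.fromBlocks_mulVec]
          funext x
          rcases x with j | j <;>
            simp [Function.comp_def, Sum.elim_comp_inl, Sum.elim_comp_inr, hA1, hB1, hBneg1, hDneg1, Pmat, dval, hih] <;> ring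
        · have hcolfun : (fun k => Pmat n hub l0 k (Sum.inr i))
              = Sum.elim (0 : Fin n → ℝ) (wvec n hub l0 i) := by
            funext k
            rcases k with j | j <;> simp [Pmat, hih]
          rw [hcolfun, Matrix.fromBlocks_mulVec]
          funext x
          rcases x with j | j
          · simp [Function.comp_def, Sum.elim_comp_inl, Sum.elim_comp_inr, hBw i hih, h0fun, Matrix.mulVec_zero, Pmat, dval, hih]
          · simp [Function.comp_def, Sum.elim_comp_inl, Sum.elim_comp_inr, hDw i hih, h0fun, Matrix.mulVec_zero, Pmat, dval, hih]
            try ring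
    ext x y
    rw [Matrix.mul_apply, Matrix.mul_diagonal, mul_comm]
    have hx := congrFun (hcol y) x
    simpa [Matrix.mulVec, dotProduct] using hx
    -- injectivity of the eigenvector basis of the star
  have hWinj : ∀ q : Fin n → ℝ, (∀ j, ∑ i, wvec n hub l0 i j * q i = 0) → q = 0 := by
    intro q hq
    have hl0mem : l0 ∈ Finset.univ.erase hub := Finset.mem_erase.mpr ⟨hl0, Finset.mem_univ _⟩
    set s : Finset (Fin n) := (Finset.univ.erase hub).erase l0 with hs
    have hhubs : hub ∉ s := by
      intro hmem
      exact Finset.notMem_erase hub Finset.univ (Finset.mem_of_mem_erase hmem)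
    have hl0s : l0 ∉ s := Finset.notMem_erase _ _
    have huniv2 : Finset.univ.erase hub = insert l0 s := (Finset.insert_erase hl0mem).symm
    have huniv1 : (Finset.univ : Finset (Fin n)) = insert hub (insert l0 s) := by
      rw [← huniv2, Finset.insert_erase (Finset.mem_univ hub)]
    have hcards : (s.card : ℝ) = (n:ℝ) - 2 := by
      rw [hs, Finset.card_erase_of_mem hl0mem,
        Finset.card_erase_of_mem (Finset.mem_univ _), Finset.card_univ, Fintype.card_fin]
      rw [Nat.cast_sub (by omega), Nat.cast_sub (by omega), Nat.cast_one]
      ring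
    have E1 : q hub + ((n:ℝ) - 1) * q l0 = 0 := by
      have h1 := hq hub
      have hterm : ∀ i, wvec n hub l0 i hub * q i
          = (if i = hub then q hub else 0) + (if i = l0 then ((n:ℝ)-1) * q l0 else 0) := by
        intro i
        rcases eq_or_ne i hub with hih | hih
        · rw [hih]; simp [wvec, hhl]
        rcases eq_or_ne i l0 with hil | hil
        · rw [hil]; simp [wvec, hl0]; try ring
        · simp [wvec, hih, hil, Ne.symm hih, hhl]
      rw [Finset.sum_congr rfl (fun i _ => hterm i), Finset.sum_add_distrib,
        Finset.sum_ite_eq' _ hub, Finset.sum_ite_eq' _ l0] at h1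
      simpa using h1
    have E2 : 2 * q hub - ∑ i, q i = 0 := by
      have h1 := hq l0
      have hterm : ∀ i, wvec n hub l0 i l0 * q i
          = (if i = hub then 2 * q hub else 0) - q i := by
        intro i
        rcases eq_or_ne i hub with hih | hih
        · rw [hih]; simp [wvec, hhl]; ring
        rcases eq_or_ne i l0 with hil | hil
        · rw [hil]; simp [wvec, hl0, hih]
        · simp [wvec, hih, hil, Ne.symm hil]
      rw [Finset.sum_congr rfl (fun i _ => hterm i), Finset.sum_sub_distrib,
        Finset.sum_ite_eq' _ hub] at h1
      simpa using h1
    have E3 : ∀ j, j ≠ hub → j ≠ l0 → q hub - q l0 + q j = 0 := by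
      intro j hjh hjl
      have h1 := hq j
      have hterm : ∀ i, wvec n hub l0 i j * q i
          = (if i = hub then q hub else 0)
            + ((if i = l0 then -q l0 else 0) + (if i = j then q j else 0)) := by
        intro i
        rcases eq_or_ne i hub with hih | hih
        · rw [hih]; simp [wvec, hhl, Ne.symm hjh]
        rcases eq_or_ne i l0 with hil | hil
        · rw [hil]; simp [wvec, hl0, hjh, Ne.symm hjl]
        rcases eq_or_ne i j with hij | hij
        · rw [hij]; simp [wvec, hjh, hjl, Ne.symm hjh, Ne.symm hjl]
        · simp [wvec, hih, hil, hij, Ne.symm hij, hjl]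
      rw [Finset.sum_congr rfl (fun i _ => hterm i), Finset.sum_add_distrib,
        Finset.sum_add_distrib, Finset.sum_ite_eq' _ hub, Finset.sum_ite_eq' _ l0,
        Finset.sum_ite_eq' _ j] at h1
      simp only [Finset.mem_univ, if_true] at h1
      linarith
    have hqs : ∀ i ∈ s, q i = q l0 - q hub := by
      intro i hi
      have hih : i ≠ l0 := (Finset.mem_erase.mp hi).1
      have hih2 : i ≠ hub := (Finset.mem_erase.mp (Finset.mem_of_mem_erase hi)).1
      have := E3 i hih2 hih
      linarith
    have hsum_univ : ∑ i, q i = q hub + q l0 + ((n:ℝ)-2) * (q l0 - q hub) := by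
      rw [huniv1, Finset.sum_insert (by simp [hhl, hhubs]),
        Finset.sum_insert hl0s, Finset.sum_congr rfl hqs, Finset.sum_const, nsmul_eq_mul,
        hcards]
      ring
    rw [hsum_univ] at E2
    have h9 : ((n:ℝ) - 1) * (q hub - q l0) = 0 := by linear_combination E2
    have hxy : q hub = q l0 := by
      rcases mul_eq_zero.mp h9 with h | h
      · exfalso; linarith
      · linarith
    have hx0 : q hub = 0 := by
      have h10 : (n:ℝ) * q hub = 0 := by
        rw [← hxy] at E1; linear_combination E1
      rcases mul_eq_zero.mp h10 with h | h
      · exfalso; linarith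
      · exact h
    funext i
    rcases eq_or_ne i hub with hih | hih
    · rw [hih]; exact hx0
    rcases eq_or_ne i l0 with hil | hil
    · rw [hil]; simpa [← hxy] using hx0
    · have := E3 i hih hil
      have : q i = q l0 - q hub := by linarith
      rw [this, ← hxy, hx0]; simp
  -- injectivity of P
  have hPinj : ∀ a : Fin n ⊕ Fin n → ℝ, Pmat n hub l0 *ᵥ a = 0 → a = 0 := by
    intro a ha
    set b : Fin n → ℝ := fun i => a (Sum.inl i) with hbdef
    set c : Fin n → ℝ := fun i => a (Sum.inr i) with hcdef
    have hrow1 : ∀ j, (∑ i, wvec n hub l0 i j * b i) + c hub = 0 := by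
      intro j
      have h1 := congrFun ha (Sum.inl j)
      simp only [Matrix.mulVec, dotProduct, Fintype.sum_sum_type, Pmat,
        Matrix.of_apply, Pi.zero_apply] at h1
      have h2 : ∀ i, (if i = hub then (1:ℝ) else 0) * a (Sum.inr i)
          = if i = hub then c i else 0 := by
        intro i; by_cases hih : i = hub <;> simp [hih, hcdef]
      rw [Finset.sum_congr rfl (fun i _ => h2 i), Finset.sum_ite_eq' _ hub] at h1
      simpa using h1
    have hrow2 : ∀ j, b hub + (∑ i, if i = hub then -(c hub) else wvec n hub l0 i j * c i)
        = 0 := by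
      intro j
      have h1 := congrFun ha (Sum.inr j)
      simp only [Matrix.mulVec, dotProduct, Fintype.sum_sum_type, Pmat,
        Matrix.of_apply, Pi.zero_apply] at h1
      have h2 : ∀ i, (if i = hub then (1:ℝ) else 0) * a (Sum.inl i)
          = if i = hub then b i else 0 := by
        intro i; by_cases hih : i = hub <;> simp [hih, hbdef]
      have h3 : ∀ i, (if i = hub then (-1:ℝ) else wvec n hub l0 i j) * a (Sum.inr i)
          = if i = hub then -(c hub) else wvec n hub l0 i j * c i := by
        intro i; by_cases hih : i = hub <;> simp [hih, hcdef]
      rw [Finset.sum_congr rfl (fun i _ => h2 i), Finset.sum_ite_eq' _ hub,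
        Finset.sum_congr rfl (fun i _ => h3 i)] at h1
      simpa using h1
    set q1 : Fin n → ℝ := fun i => if i = hub then b hub + c hub else b i with hq1def
    set q2 : Fin n → ℝ := fun i => if i = hub then b hub - c hub else c i with hq2def
    have hq1 : q1 = 0 := by
      apply hWinj
      intro j
      have hterm : ∀ i, wvec n hub l0 i j * q1 i
          = wvec n hub l0 i j * b i + (if i = hub then c hub else 0) := by
        intro i
        rcases eq_or_ne i hub with hih | hih
        · rw [hih]; simp [hq1def, wvec]; try ring
        · simp [hq1def, hih]
      rw [Finset.sum_congr rfl (fun i _ => hterm i), Finset.sum_add_distrib,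
        Finset.sum_ite_eq' _ hub]
      simpa using hrow1 j
    have hq2 : q2 = 0 := by
      apply hWinj
      intro j
      have hterm : ∀ i, wvec n hub l0 i j * q2 i
          = (if i = hub then b hub else 0)
            + (if i = hub then -(c hub) else wvec n hub l0 i j * c i) := by
        intro i
        rcases eq_or_ne i hub with hih | hih
        · rw [hih]; simp [hq2def, wvec]; ring
        · simp [hq2def, hih]
      rw [Finset.sum_congr rfl (fun i _ => hterm i), Finset.sum_add_distrib,
        Finset.sum_ite_eq' _ hub]
      simpa using hrow2 j
    have hbh : b hub = 0 ∧ c hub = 0 := by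
      have e1 := congrFun hq1 hub
      have e2 := congrFun hq2 hub
      simp [hq1def, hq2def] at e1 e2
      constructor <;> linarith
    funext k
    rcases k with i | i
    · rcases eq_or_ne i hub with hih | hih
      · rw [hih]; exact hbh.1
      · have := congrFun hq1 i
        simpa [hq1def, hih] using this
    · rcases eq_or_ne i hub with hih | hih
      · rw [hih]; exact hbh.2
      · have := congrFun hq2 i
        simpa [hq2def, hih] using this
  have hPunit : IsUnit (Pmat n hub l0) := by
    rw [← Matrix.mulVec_injective_iff_isUnit]
    intro x y hxy
    have hsub : Pmat n hub l0 *ᵥ (x - y) = 0 := by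
      rw [Matrix.mulVec_sub, hxy, sub_self]
    have := hPinj _ hsub
    exact sub_eq_zero.mp this
    -- eigenvalue multiset
  have hms := my_eig_multiset hQH (dval n hub l0 p) (Pmat n hub l0) hPunit hQP
  have hunivsum : (Finset.univ : Finset (Fin n ⊕ Fin n)).val
      = Multiset.map Sum.inl (Finset.univ : Finset (Fin n)).val
        + Multiset.map Sum.inr (Finset.univ : Finset (Fin n)).val := rfl
  have hmap : Multiset.map (dval n hub l0 p) (Finset.univ : Finset (Fin n ⊕ Fin n)).val
      = ((0:ℝ) ::ₘ ((n:ℝ) + (n:ℝ)*p) ::ₘ Multiset.replicate (n-2) (1 + (n:ℝ)*p))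
        + ((2*(n:ℝ)*p) ::ₘ ((n:ℝ)*p) ::ₘ Multiset.replicate (n-2) ((n:ℝ) - 1 + (n:ℝ)*p)) := by
    rw [hunivsum, Multiset.map_add, Multiset.map_map, Multiset.map_map]
    congr 1
    · exact my_map_univ hub l0 hl0 _ _ _ _ (by simp [dval])
        (by simp [dval, muval, hl0])
        (fun i hih hil => by simp [Function.comp, dval, muval, hih, hil])
    · refine my_map_univ hub l0 hl0 _ _ _ _ (by simp [dval]) ?_
        (fun i hih hil => by simp [Function.comp, dval, muval, hih, hil]; try ring)
      simp [dval, muval, hl0]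
  have hkey : (sortedEigs hQH)[2]! = min (2*(n:ℝ)*p) (1+(n:ℝ)*p) := by
    show (Multiset.sort ((Finset.univ.val).map hQH.eigenvalues) (· ≤ ·))[2]! = _
    rw [hms, hmap]
    rcases le_total (2*(n:ℝ)*p) (1+(n:ℝ)*p) with hc | hc
    · rw [min_eq_left hc]
      rw [Multiset.cons_add, Multiset.add_cons, Multiset.add_cons,
        Multiset.cons_swap (2*(n:ℝ)*p) ((n:ℝ)*p)]
      apply my_sort_getElem2
      · positivity
      · nlinarith
      · intro x hx
        simp only [Multiset.mem_add, Multiset.mem_cons] at hx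
        rcases hx with (hx | hx) | hx
        · rw [hx]; linarith
        · rw [Multiset.eq_of_mem_replicate hx]; linarith
        · rw [Multiset.eq_of_mem_replicate hx]; linarith
    · rw [min_eq_right hc]
      have hsplit : Multiset.replicate (n-2) (1+(n:ℝ)*p)
          = (1+(n:ℝ)*p) ::ₘ Multiset.replicate (n-3) (1+(n:ℝ)*p) := by
        rw [show n - 2 = (n-3)+1 by omega, Multiset.replicate_succ]
      rw [hsplit]
      have hre : ((0:ℝ) ::ₘ ((n:ℝ)+(n:ℝ)*p) ::ₘ (1+(n:ℝ)*p)
            ::ₘ Multiset.replicate (n-3) (1+(n:ℝ)*p))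
          + ((2*(n:ℝ)*p) ::ₘ ((n:ℝ)*p) ::ₘ Multiset.replicate (n-2) ((n:ℝ)-1+(n:ℝ)*p))
          = (0:ℝ) ::ₘ ((n:ℝ)*p) ::ₘ (1+(n:ℝ)*p)
            ::ₘ (((n:ℝ)+(n:ℝ)*p) ::ₘ (2*(n:ℝ)*p)
              ::ₘ (Multiset.replicate (n-3) (1+(n:ℝ)*p)
                + Multiset.replicate (n-2) ((n:ℝ)-1+(n:ℝ)*p))) := by
        simp only [← Multiset.singleton_add]
        abel
      rw [hre]
      apply my_sort_getElem2
      · positivity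
      · linarith
      · intro x hx
        simp only [Multiset.mem_add, Multiset.mem_cons] at hx
        rcases hx with hx | hx | hx | hx
        · rw [hx]; linarith
        · rw [hx]; linarith
        · rw [Multiset.eq_of_mem_replicate hx]
        · rw [Multiset.eq_of_mem_replicate hx]; linarith
  refine ⟨hkey, fun hple => ?_, fun hpge => ?_⟩
  · have h1 : (n:ℝ)*p ≤ 1 := by
      rw [mul_comm]; exact (le_div_iff₀ hnpos).mp hple
    rw [hkey, min_eq_left (by linarith)]
  · have h1 : 1 ≤ (n:ℝ)*p := by
      rw [mul_comm]; exact (div_le_iff₀ hnpos).mp hpge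
    rw [hkey, min_eq_right (by linarith)]
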